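/- arXiv:2306.02847 — 2 statements merged into one kernel-verified Lean document; each statement's English description precedes it below -/
import Mathlib

section
/- The cell-centered divergence appearing in L_{ij} := 1 + (Δt/Δx)[u*]_{i±1/2,j} + (Δt/Δy)[v*]_{i,j±1/2}, where u* and v* are edge-averaged quantities u*_{i+1/2,j} := ({{{u}_{i+1/2}}}_{j±1/2})/8 and v*_{i,j+1/2} := ({{{v}}_{i±1/2}}_{j+1/2})/8, equals 1 + Δt times the average of the four node-based divergences at the corners of cell (i,j), where the node divergence at (i+1/2,j+1/2) is ({[u]_{i+1/2}}_{j+1/2})/(2Δx) + ([{v}_{i+1/2}]_{j+1/2})/(2Δy). Consequently, if all node-based divergences vanish, then L_{ij} = 1 for all cells. -/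
/-- The cell-centered divergence in `L_ij` is the average of the four node-based
divergences at the corners of cell `(i,j)`; consequently if all node-based
divergences vanish then `L_ij = 1`. Node `(i,j)` stands for `(i+1/2, j+1/2)`;
`ustar i j` stands for `u*_{i+1/2,j}` and `vstar i j` for `v*_{i,j+1/2}`. -/
theorem L_eq_one_of_node_div_zero (u v : ℤ × ℤ → ℝ) (Δt Δx Δy : ℝ)
    (hΔt : 0 < Δt) (hΔx : 0 < Δx) (hΔy : 0 < Δy)
    (ustar vstar : ℤ → ℤ → ℝ)
    (hustar : ∀ i j, ustar i j =
      (u (i, j - 1) + u (i + 1, j - 1) + 2 * u (i, j) + 2 * u (i + 1, j) +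
        u (i, j + 1) + u (i + 1, j + 1)) / 8)
    (hvstar : ∀ i j, vstar i j =
      (v (i - 1, j) + v (i - 1, j + 1) + 2 * v (i, j) + 2 * v (i, j + 1) +
        v (i + 1, j) + v (i + 1, j + 1)) / 8)
    (L : ℤ → ℤ → ℝ)
    (hL : ∀ i j, L i j = 1 + Δt / Δx * (ustar i j - ustar (i - 1) j)
      + Δt / Δy * (vstar i j - vstar i (j - 1)))
    (Dnode : ℤ → ℤ → ℝ)
    (hDnode : ∀ i j, Dnode i j =
      ((u (i + 1, j + 1) - u (i, j + 1)) + (u (i + 1, j) - u (i, j))) / (2 * Δx) +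
      ((v (i + 1, j + 1) + v (i, j + 1)) - (v (i + 1, j) + v (i, j))) / (2 * Δy)) :
    (∀ i j, L i j = 1 + Δt *
        ((Dnode i j + Dnode (i - 1) j + Dnode i (j - 1) + Dnode (i - 1) (j - 1)) / 4)) ∧
      ((∀ i j, Dnode i j = 0) → ∀ i j, L i j = 1) := by
  have key : ∀ i j, L i j = 1 + Δt *
      ((Dnode i j + Dnode (i - 1) j + Dnode i (j - 1) + Dnode (i - 1) (j - 1)) / 4) := by
    intro i j
    rw [hL, hustar, hustar, hvstar, hvstar, hDnode, hDnode, hDnode, hDnode]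
    have h1 : i - 1 + 1 = i := by ring
    have h2 : j - 1 + 1 = j := by ring
    rw [h1, h2]
    field_simp
    ring
  exact ⟨key, fun h i j => by rw [key i j, h, h, h, h]; ring⟩
end

section
/- The update matrix M(θ) = [[1, z],[-z̄, 1 - |z|²]] with z = i λ Δt sin(θ) (arising from von Neumann analysis of the sequential-explicit central scheme for the 1-d acoustic system) satisfies |det M(θ)| = 1 for all θ, and for |λ Δt| ≤ 2 both eigenvalues of M(θ) lie on the unit circle for every θ ∈ [0, 2π). -/
lemma key_quadratic (a : ℝ) (ha : |a| ≤ 2) (μ : ℂ)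
    (h : μ ^ 2 - (a : ℂ) * μ + 1 = 0) : ‖μ‖ = 1 := by
  have hre := congrArg Complex.re h
  have him := congrArg Complex.im h
  simp [pow_two, Complex.add_re, Complex.sub_re, Complex.mul_re, Complex.mul_im,
    Complex.add_im, Complex.sub_im, Complex.ofReal_re, Complex.ofReal_im] at hre him
  set x := μ.re; set y := μ.im
  have ha2 : a ^ 2 ≤ 4 := by nlinarith [abs_nonneg a, sq_abs a]
  have hn : x ^ 2 + y ^ 2 = 1 := by
    rcases mul_eq_zero.mp (by nlinarith : y * (2 * x - a) = 0) with hy | hxa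
    · have h4 : (2 * x - a) ^ 2 = a ^ 2 - 4 := by nlinarith
      have h5 : (2 * x - a) ^ 2 = 0 := le_antisymm (by linarith) (sq_nonneg _)
      have h6 : 2 * x - a = 0 := by
        exact pow_eq_zero_iff (n := 2) (by norm_num) |>.mp h5
      nlinarith
    · have ha' : a = 2 * x := by linarith
      linear_combination -hre - x * ha'
  have : ‖μ‖ ^ 2 = 1 := by
    rw [Complex.sq_norm, Complex.normSq_apply]; nlinarith
  nlinarith [norm_nonneg μ]

open Matrix in
/-- Von Neumann analysis of the sequential-explicit central scheme for the 1-d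
acoustic system: the amplification matrix `M(θ) = [[1, z],[-z̄, 1-|z|²]]` with
`z = iλΔt sin θ` has `|det M(θ)| = 1` for every `θ`, and for `|λΔt| ≤ 2` every
eigenvalue of `M(θ)` lies on the unit circle. -/
theorem von_neumann_unit_circle (lam Δt : ℝ) (hΔt : 0 < Δt)
    (z : ℝ → ℂ) (hz : ∀ θ, z θ = Complex.I * lam * Δt * Real.sin θ)
    (M : ℝ → Matrix (Fin 2) (Fin 2) ℂ)
    (hM : ∀ θ, M θ = !![(1 : ℂ), z θ;
      -(starRingEnd ℂ) (z θ), (1 : ℂ) - (‖z θ‖ : ℂ) ^ 2]) :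
    (∀ θ : ℝ, ‖(M θ).det‖ = 1) ∧
      (|lam * Δt| ≤ 2 → ∀ θ ∈ Set.Ico (0 : ℝ) (2 * Real.pi), ∀ μ : ℂ,
        (M θ - μ • (1 : Matrix (Fin 2) (Fin 2) ℂ)).det = 0 → ‖μ‖ = 1) := by
  have hzz : ∀ θ, z θ * (starRingEnd ℂ) (z θ) = ((‖z θ‖ : ℂ)) ^ 2 := by
    intro θ
    rw [Complex.mul_conj, ← Complex.sq_norm]
    push_cast
    ring
  constructor
  · intro θ
    rw [hM θ, Matrix.det_fin_two_of]
    have h1 : (1 : ℂ) * ((1 : ℂ) - (‖z θ‖ : ℂ) ^ 2)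
        - z θ * -(starRingEnd ℂ) (z θ) = 1 := by linear_combination hzz θ
    rw [h1]; simp
  · intro hlam θ _ μ hdet
    have hs : ‖z θ‖ ≤ 2 := by
      rw [hz θ]
      simp only [norm_mul, Complex.norm_I, Complex.norm_real, Real.norm_eq_abs, one_mul]
      calc |lam| * |Δt| * |Real.sin θ| ≤ |lam| * |Δt| * 1 := by
            gcongr
            exact Real.abs_sin_le_one θ
          _ = |lam * Δt| := by rw [mul_one, abs_mul]
          _ ≤ 2 := hlam
    rw [hM θ] at hdet
    have hdet2 : μ ^ 2 - ((2 - ‖z θ‖ ^ 2 : ℝ) : ℂ) * μ + 1 = 0 := by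
      have hexp : (!![(1 : ℂ), z θ; -(starRingEnd ℂ) (z θ),
          (1 : ℂ) - (‖z θ‖ : ℂ) ^ 2] - μ • (1 : Matrix (Fin 2) (Fin 2) ℂ)).det
          = μ ^ 2 - ((2 - ‖z θ‖ ^ 2 : ℝ) : ℂ) * μ + 1 := by
        simp [Matrix.det_fin_two, Matrix.one_apply]
        linear_combination hzz θ
      rw [← hexp]; exact hdet
    refine key_quadratic _ ?_ μ hdet2
    rw [abs_le]
    constructor
    · nlinarith [norm_nonneg (z θ)]
    · nlinarith [norm_nonneg (z θ)]
end
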